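/- Let s ≥ 0 and let a_s(ξ,η,θ) = |η + θξ|^s. For all multi-indices α, β ∈ ℕ₀ⁿ there is a constant C > 0 such that for all (ξ,η) in the cone Γ = {(ξ,η) ∈ ℝⁿ×ℝⁿ : 0 < |ξ| ≤ |η|/2}, one has sup_{0 ≤ θ ≤ 1} |∂_ξ^α ∂_η^β a_s(ξ,η,θ)| ≤ C |η|^{s−|α|−|β|}. -/

import Mathlib

/-!
Away from the origin `x ↦ ‖x‖ ^ s` is smooth and positively homogeneous of degree `s`, so its
`m`-th derivative is homogeneous of degree `s - m`; by compactness of the unit sphere it is bounded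
by `M * ‖x‖ ^ (s - m)`. Since `a_s = ‖·‖ ^ s ∘ g` with `g (ξ, η) = η + θ • ξ` linear,
`∂_ξ^α ∂_η^β a_s (ξ, η)` is that `m`-th derivative at `g (ξ, η)` evaluated on the images under `g`
of coordinate vectors, which have norm at most `1`; on the cone `‖g (ξ, η)‖` is comparable to `‖η‖`.
-/

noncomputable section

variable {n : ℕ}

/-- Directional derivative operator on functions on `ℝⁿ × ℝⁿ`. -/
def pd2 (v : EuclideanSpace ℝ (Fin n) × EuclideanSpace ℝ (Fin n))
    (a : EuclideanSpace ℝ (Fin n) × EuclideanSpace ℝ (Fin n) → ℂ) :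
    EuclideanSpace ℝ (Fin n) × EuclideanSpace ℝ (Fin n) → ℂ :=
  fun p => fderiv ℝ a p v

/-- Iterated directional derivatives along a list of directions. -/
def pdList2 : List (EuclideanSpace ℝ (Fin n) × EuclideanSpace ℝ (Fin n)) →
    (EuclideanSpace ℝ (Fin n) × EuclideanSpace ℝ (Fin n) → ℂ) →
    EuclideanSpace ℝ (Fin n) × EuclideanSpace ℝ (Fin n) → ℂ
  | [], a => a
  | v :: L, a => pd2 v (pdList2 L a)

/-- The multi-index partial derivative `∂_ξ^α ∂_η^β` of a function `a(ξ,η)`. -/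
def mderiv2 (α β : Fin n → ℕ)
    (a : EuclideanSpace ℝ (Fin n) × EuclideanSpace ℝ (Fin n) → ℂ) :
    EuclideanSpace ℝ (Fin n) × EuclideanSpace ℝ (Fin n) → ℂ :=
  pdList2
    ((List.finRange n).flatMap
        (fun i => List.replicate (α i) (EuclideanSpace.single i 1, 0))
      ++ (List.finRange n).flatMap
        (fun i => List.replicate (β i) (0, EuclideanSpace.single i 1))) a

open Set Filter Topology
open scoped ContDiff

section IteratedFDeriv

variable {𝕜 : Type*} [NontriviallyNormedField 𝕜]
  {E F G : Type*} [NormedAddCommGroup E] [NormedSpace 𝕜 E] [NormedAddCommGroup F]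
  [NormedSpace 𝕜 F] [NormedAddCommGroup G] [NormedSpace 𝕜 G]

theorem iteratedFDeriv_comp_right_of_isOpen {f : E → F} {s : Set E} {k : WithTop ℕ∞}
    (hs : IsOpen s) (hf : ContDiffOn 𝕜 k f s) (g : G →L[𝕜] E) {x : G} (hx : g x ∈ s)
    {i : ℕ} (hi : i ≤ k) :
    iteratedFDeriv 𝕜 i (f ∘ g) x =
      (iteratedFDeriv 𝕜 i f (g x)).compContinuousLinearMap fun _ => g := by
  have hs' : IsOpen (g ⁻¹' s) := hs.preimage g.continuous
  rw [← iteratedFDerivWithin_of_isOpen i hs' hx, ← iteratedFDerivWithin_of_isOpen i hs hx]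
  exact g.iteratedFDerivWithin_comp_right hf hs.uniqueDiffOn hs'.uniqueDiffOn hx hi

end IteratedFDeriv

theorem exists_norm_iteratedFDeriv_le_of_homogeneous {E F : Type*} [NormedAddCommGroup E]
    [NormedSpace ℝ E] [ProperSpace E] [NormedAddCommGroup F] [NormedSpace ℝ F]
    {h : E → F} {s : ℝ} {m : ℕ} (hh : ContDiffOn ℝ m h {0}ᶜ)
    (hom : ∀ c : ℝ, 0 < c → ∀ x, h (c • x) = c ^ s • h x) :
    ∃ M, ∀ x ≠ 0, ‖iteratedFDeriv ℝ m h x‖ ≤ M * ‖x‖ ^ (s - m) := by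
  have hopen : IsOpen ({0}ᶜ : Set E) := isOpen_compl_singleton
  have hcont : ContinuousOn (iteratedFDeriv ℝ m h) {0}ᶜ :=
    (hh.continuousOn_iteratedFDerivWithin le_rfl hopen.uniqueDiffOn).congr
      fun x hx => (iteratedFDerivWithin_of_isOpen m hopen hx).symm
  obtain ⟨M, hM⟩ := (isCompact_sphere (0 : E) 1).exists_bound_of_continuousOn
    (hcont.mono fun x hx => ne_zero_of_mem_sphere one_ne_zero ⟨x, hx⟩)
  refine ⟨M, fun x hx => ?_⟩
  set c := ‖x‖
  have hc : 0 < c := norm_pos_iff.mpr hx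
  set g : E →L[ℝ] E := c⁻¹ • ContinuousLinearMap.id ℝ E
  have hgx1 : ‖g x‖ = 1 := by
    simp only [g, smul_apply, ContinuousLinearMap.id_apply, norm_smul, norm_inv,
      Real.norm_of_nonneg hc.le]
    exact inv_mul_cancel₀ hc.ne'
  have hgx : g x ∈ ({0}ᶜ : Set E) := ne_zero_of_norm_ne_zero (by simp [hgx1])
  have hscale : h = fun y => c ^ s • (h ∘ g) y := by
    ext y
    simp [g, hom c⁻¹ (inv_pos.mpr hc), smul_smul, ← Real.mul_rpow hc.le (inv_pos.mpr hc).le,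
      hc.ne']
  have hdiff : ContDiffAt ℝ m (h ∘ g) x :=
    (hh.contDiffAt (hopen.mem_nhds hgx)).comp x g.contDiff.contDiffAt
  have hg : ‖g‖ ≤ c⁻¹ := by
    refine (norm_smul_le c⁻¹ (ContinuousLinearMap.id ℝ E)).trans ?_
    rw [norm_inv, Real.norm_of_nonneg hc.le]
    exact mul_le_of_le_one_right (inv_nonneg.mpr hc.le) ContinuousLinearMap.norm_id_le
  calc ‖iteratedFDeriv ℝ m h x‖
      = ‖iteratedFDeriv ℝ m (fun y => c ^ s • (h ∘ g) y) x‖ := by rw [← hscale]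
    _ = c ^ s * ‖(iteratedFDeriv ℝ m h (g x)).compContinuousLinearMap fun _ => g‖ := by
        rw [iteratedFDeriv_const_smul_apply' hdiff, norm_smul,
          iteratedFDeriv_comp_right_of_isOpen hopen hh g hgx le_rfl, Real.norm_eq_abs,
          abs_of_pos (Real.rpow_pos_of_pos hc s)]
    _ ≤ c ^ s * (M * c⁻¹ ^ m) := by
        gcongr
        refine (ContinuousMultilinearMap.norm_compContinuousLinearMap_le _ _).trans ?_
        rw [Finset.prod_const, Finset.card_univ, Fintype.card_fin]
        gcongr
        · exact (norm_nonneg _).trans (hM _ (mem_sphere_zero_iff_norm.mpr hgx1))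
        · exact hM _ (mem_sphere_zero_iff_norm.mpr hgx1)
    _ = M * c ^ (s - m) := by
        rw [Real.rpow_sub hc, Real.rpow_natCast, inv_pow, div_eq_mul_inv]
        ring

theorem contDiffOn_ofReal_norm_rpow {E : Type*} [NormedAddCommGroup E] [InnerProductSpace ℝ E]
    (s : ℝ) {k : WithTop ℕ∞} : ContDiffOn ℝ k (fun x : E => ((‖x‖ ^ s : ℝ) : ℂ)) {0}ᶜ :=
  fun _ hx => (Complex.ofRealCLM.contDiff.comp_contDiffAt _
    ((contDiffAt_norm ℝ hx).rpow_const_of_ne (norm_ne_zero_iff.mpr hx))).contDiffWithinAt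

theorem ofReal_norm_smul_rpow {E : Type*} [NormedAddCommGroup E] [NormedSpace ℝ E] (s : ℝ)
    {c : ℝ} (hc : 0 < c) (x : E) :
    ((‖c • x‖ ^ s : ℝ) : ℂ) = c ^ s • ((‖x‖ ^ s : ℝ) : ℂ) := by
  rw [norm_smul, Real.norm_of_nonneg hc.le, Real.mul_rpow hc.le (norm_nonneg x),
    Complex.ofReal_mul, Complex.real_smul]

theorem norm_add_smul_mem_Icc {E : Type*} [NormedAddCommGroup E] [NormedSpace ℝ E]
    {ξ η : E} (hξη : ‖ξ‖ ≤ ‖η‖ / 2) {θ : ℝ} (hθ : θ ∈ Icc (0 : ℝ) 1) :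
    ‖η + θ • ξ‖ ∈ Icc (1 / 2 * ‖η‖) (3 / 2 * ‖η‖) := by
  have hθξ : ‖θ • ξ‖ ≤ ‖η‖ / 2 := by
    rw [norm_smul, Real.norm_of_nonneg hθ.1]
    nlinarith [norm_nonneg ξ, hθ.2]
  constructor
  · have := norm_sub_le (η + θ • ξ) (θ • ξ)
    rw [add_sub_cancel_right] at this
    linarith
  · linarith [norm_add_le η (θ • ξ)]

theorem rpow_le_add_rpow_of_mem_Icc {a b x : ℝ} (ha : 0 < a) (hx : x ∈ Icc a b) (r : ℝ) :
    x ^ r ≤ a ^ r + b ^ r := by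
  have hx0 : 0 < x := ha.trans_le hx.1
  rcases le_or_gt 0 r with hr | hr
  · linarith [Real.rpow_le_rpow hx0.le hx.2 hr, Real.rpow_nonneg ha.le r]
  · linarith [Real.rpow_le_rpow_of_nonpos ha hx.1 hr.le, Real.rpow_nonneg (hx0.le.trans hx.2) r]

theorem pdList2_eq_iteratedFDeriv {f : EuclideanSpace ℝ (Fin n) × EuclideanSpace ℝ (Fin n) → ℂ}
    {U : Set (EuclideanSpace ℝ (Fin n) × EuclideanSpace ℝ (Fin n))} (hU : IsOpen U)
    (hf : ContDiffOn ℝ ∞ f U) (L : List (EuclideanSpace ℝ (Fin n) × EuclideanSpace ℝ (Fin n)))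
    {p : EuclideanSpace ℝ (Fin n) × EuclideanSpace ℝ (Fin n)} (hp : p ∈ U) :
    pdList2 L f p = iteratedFDeriv ℝ L.length f p L.get := by
  induction L generalizing p with
  | nil => simp [pdList2]
  | cons v L ih =>
    have hev : pdList2 L f =ᶠ[𝓝 p] fun q => iteratedFDeriv ℝ L.length f q L.get :=
      eventually_of_mem (hU.mem_nhds hp) fun q hq => ih hq
    have hdiff : DifferentiableAt ℝ (iteratedFDeriv ℝ L.length f) p :=
      (hf.contDiffAt (hU.mem_nhds hp)).differentiableAt_iteratedFDeriv
        (by exact_mod_cast WithTop.coe_lt_top _)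
    show fderiv ℝ (pdList2 L f) p v = _
    rw [hev.fderiv_eq, fderiv_continuousMultilinear_apply_const_apply hdiff]
    rfl

theorem norm_pdList2_comp_le {h : EuclideanSpace ℝ (Fin n) → ℂ}
    (hh : ContDiffOn ℝ ∞ h {0}ᶜ)
    (g : EuclideanSpace ℝ (Fin n) × EuclideanSpace ℝ (Fin n) →L[ℝ] EuclideanSpace ℝ (Fin n))
    (L : List (EuclideanSpace ℝ (Fin n) × EuclideanSpace ℝ (Fin n))) (hL : ∀ v ∈ L, ‖g v‖ ≤ 1)
    {p : EuclideanSpace ℝ (Fin n) × EuclideanSpace ℝ (Fin n)} (hp : g p ≠ 0) :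
    ‖pdList2 L (h ∘ g) p‖ ≤ ‖iteratedFDeriv ℝ L.length h (g p)‖ := by
  have hopen : IsOpen ({0}ᶜ : Set (EuclideanSpace ℝ (Fin n))) := isOpen_compl_singleton
  rw [pdList2_eq_iteratedFDeriv (hopen.preimage g.continuous) (hh.comp_continuousLinearMap g) L
    hp, iteratedFDeriv_comp_right_of_isOpen hopen hh g hp (by exact_mod_cast le_top),
    ContinuousMultilinearMap.compContinuousLinearMap_apply]
  refine ((iteratedFDeriv ℝ L.length h (g p)).le_opNorm _).trans ?_
  refine mul_le_of_le_one_right (norm_nonneg _) ?_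
  exact Finset.prod_le_one (fun _ _ => norm_nonneg _) fun i _ => hL _ (List.get_mem L i)

def mderiv2Directions (α β : Fin n → ℕ) :
    List (EuclideanSpace ℝ (Fin n) × EuclideanSpace ℝ (Fin n)) :=
  (List.finRange n).flatMap (fun i => List.replicate (α i) (EuclideanSpace.single i 1, 0))
    ++ (List.finRange n).flatMap (fun i => List.replicate (β i) (0, EuclideanSpace.single i 1))

theorem mderiv2_eq_pdList2 (α β : Fin n → ℕ)
    (a : EuclideanSpace ℝ (Fin n) × EuclideanSpace ℝ (Fin n) → ℂ) :
    mderiv2 α β a = pdList2 (mderiv2Directions α β) a :=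
  rfl

theorem length_mderiv2Directions (α β : Fin n → ℕ) :
    (mderiv2Directions α β).length = ∑ i, α i + ∑ i, β i := by
  simp [mderiv2Directions, List.length_flatMap, Fin.sum_univ_def]

theorem norm_snd_add_smul_fst_le_one_of_mem_mderiv2Directions {α β : Fin n → ℕ} {θ : ℝ}
    (hθ : θ ∈ Icc (0 : ℝ) 1) {v : EuclideanSpace ℝ (Fin n) × EuclideanSpace ℝ (Fin n)}
    (hv : v ∈ mderiv2Directions α β) : ‖v.2 + θ • v.1‖ ≤ 1 := by
  simp only [mderiv2Directions, List.mem_append, List.mem_flatMap, List.mem_replicate] at hv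
  rcases hv with ⟨i, -, -, rfl⟩ | ⟨i, -, -, rfl⟩
  · simpa [norm_smul, abs_of_nonneg hθ.1] using hθ.2
  · simp

theorem symbol_derivative_bound_general (s : ℝ) (α β : Fin n → ℕ) :
    ∃ C > (0 : ℝ), ∀ ξ η : EuclideanSpace ℝ (Fin n), 0 < ‖ξ‖ → ‖ξ‖ ≤ ‖η‖ / 2 →
      ∀ θ ∈ Set.Icc (0 : ℝ) 1,
        ‖mderiv2 α β (fun p => ((‖p.2 + θ • p.1‖ ^ s : ℝ) : ℂ)) (ξ, η)‖
          ≤ C * ‖η‖ ^ (s - ((∑ i, α i : ℕ) : ℝ) - ((∑ i, β i : ℕ) : ℝ)) := by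
  set m := ∑ i, α i + ∑ i, β i with hm
  set r : ℝ := s - m
  obtain ⟨M, hM⟩ := exists_norm_iteratedFDeriv_le_of_homogeneous (m := m)
    (contDiffOn_ofReal_norm_rpow (E := EuclideanSpace ℝ (Fin n)) s)
    fun c hc x => ofReal_norm_smul_rpow s hc x
  refine ⟨max M 1 * ((1 / 2) ^ r + (3 / 2) ^ r), by positivity, fun ξ η hξ hξη θ hθ => ?_⟩
  have hr : s - ((∑ i, α i : ℕ) : ℝ) - ((∑ i, β i : ℕ) : ℝ) = r := by
    simp only [r, m]
    push_cast
    ring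
  rw [hr]
  set g := ContinuousLinearMap.snd ℝ (EuclideanSpace ℝ (Fin n)) (EuclideanSpace ℝ (Fin n)) +
    θ • ContinuousLinearMap.fst ℝ (EuclideanSpace ℝ (Fin n)) (EuclideanSpace ℝ (Fin n))
  have hbounds := norm_add_smul_mem_Icc hξη hθ
  have hη : 0 < 1 / 2 * ‖η‖ := by linarith
  have hne : η + θ • ξ ≠ 0 := norm_pos_iff.mp (hη.trans_le hbounds.1)
  calc ‖mderiv2 α β (fun p => ((‖p.2 + θ • p.1‖ ^ s : ℝ) : ℂ)) (ξ, η)‖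
      ≤ ‖iteratedFDeriv ℝ m (fun x => ((‖x‖ ^ s : ℝ) : ℂ)) (η + θ • ξ)‖ := by
        rw [mderiv2_eq_pdList2, hm, ← length_mderiv2Directions α β]
        exact norm_pdList2_comp_le (contDiffOn_ofReal_norm_rpow s) g _
          (fun v hv => norm_snd_add_smul_fst_le_one_of_mem_mderiv2Directions hθ hv) hne
    _ ≤ max M 1 * ‖η + θ • ξ‖ ^ r := (hM _ hne).trans (by gcongr; exact le_max_left M 1)
    _ ≤ max M 1 * ((1 / 2 * ‖η‖) ^ r + (3 / 2 * ‖η‖) ^ r) := by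
        gcongr
        exact rpow_le_add_rpow_of_mem_Icc hη hbounds r
    _ = max M 1 * ((1 / 2) ^ r + (3 / 2) ^ r) * ‖η‖ ^ r := by
        rw [Real.mul_rpow (by norm_num) (norm_nonneg η),
          Real.mul_rpow (by norm_num) (norm_nonneg η)]
        ring

/-- Let `s ≥ 0` and `a_s(ξ,η,θ) = |η+θξ|^s`.  For all multi-indices `α, β` there
is `C > 0` such that on the cone `Γ = {0 < |ξ| ≤ |η|/2}`,
`sup_{0≤θ≤1} |∂_ξ^α ∂_η^β a_s(ξ,η,θ)| ≤ C |η|^{s-|α|-|β|}`. -/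
theorem symbol_derivative_bound (s : ℝ) (hs : 0 ≤ s) (α β : Fin n → ℕ) :
    ∃ C > (0 : ℝ), ∀ ξ η : EuclideanSpace ℝ (Fin n), 0 < ‖ξ‖ → ‖ξ‖ ≤ ‖η‖ / 2 →
      ∀ θ ∈ Set.Icc (0 : ℝ) 1,
        ‖mderiv2 α β (fun p => ((‖p.2 + θ • p.1‖ ^ s : ℝ) : ℂ)) (ξ, η)‖
          ≤ C * ‖η‖ ^ (s - ((∑ i, α i : ℕ) : ℝ) - ((∑ i, β i : ℕ) : ℝ)) :=
  symbol_derivative_bound_general s α β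

end
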